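/- arXiv:1606.07401 — 7 statements merged into one kernel-verified Lean document; each statement's English description precedes it below -/
import Mathlib

section
/- If a continuous map f on a compact metric space X has the local weak specification property, then f has the shadowing property. -/
open MeasureTheory Filter Metric Topology

variable {X : Type*}

/-- Iterate of a homeomorphism by an integer. -/
noncomputable def zit [TopologicalSpace X] (f : X ≃ₜ X) (i : ℤ) (x : X) : X :=
  (f.toEquiv ^ i) x

/-- The dynamical ball `Γ_δ(x)` of a homeomorphism. -/
def Gamma [MetricSpace X] (f : X ≃ₜ X) (δ : ℝ) (x : X) : Set X :=
  {y | ∀ i : ℤ, dist (zit f i x) (zit f i y) ≤ δ}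

/-- Shadowing property for one-sided (ℕ-indexed) pseudo-orbits. -/
def ShadowingN [MetricSpace X] (f : X → X) : Prop :=
  ∀ ε > (0 : ℝ), ∃ δ > (0 : ℝ), ∀ x : ℕ → X,
    (∀ i, dist (f (x i)) (x (i + 1)) < δ) →
    ∃ y, ∀ i, dist (f^[i] y) (x i) < ε

/-- Shadowing property for two-sided (ℤ-indexed) pseudo-orbits of a homeomorphism. -/
def ShadowingZ [MetricSpace X] (f : X ≃ₜ X) : Prop :=
  ∀ ε > (0 : ℝ), ∃ δ > (0 : ℝ), ∀ x : ℤ → X,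
    (∀ i, dist (f (x i)) (x (i + 1)) < δ) →
    ∃ y, ∀ i, dist (zit f i y) (x i) < ε

/-- Local weak specification property. -/
def LocalWeakSpec [MetricSpace X] (f : X → X) : Prop :=
  ∀ ε > (0 : ℝ), ∃ N : ℕ, ∃ δ > (0 : ℝ), ∀ n, N ≤ n → ∀ (k : ℕ) (x : ℕ → X),
    (∀ i, i + 1 < k → dist (f^[n] (x i)) (x (i + 1)) < δ) →
    ∃ y, ∀ i < k, ∀ j, i * n ≤ j → j < (i + 1) * n →
      dist (f^[j] y) (f^[j - i * n] (x i)) < ε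

/-- Local specification property (tracing point is periodic when the chain closes up). -/
def LocalSpec [MetricSpace X] (f : X → X) : Prop :=
  ∀ ε > (0 : ℝ), ∃ N : ℕ, ∃ δ > (0 : ℝ), ∀ n, N ≤ n → ∀ k, 1 ≤ k → ∀ x : ℕ → X,
    (∀ i < k, dist (f^[n] (x i)) (x ((i + 1) % k)) < δ) →
    ∃ y, f^[k * n] y = y ∧ ∀ i < k, ∀ j, i * n ≤ j → j < (i + 1) * n →
      dist (f^[j] y) (f^[j - i * n] (x i)) < ε

/-- A point is periodic for `f`. -/
def IsPeriodicPt' (f : X → X) (y : X) : Prop := ∃ m, 1 ≤ m ∧ f^[m] y = y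

/-- Periodic shadowing property for one-sided pseudo-orbits. -/
def PeriodicShadowingN [MetricSpace X] (f : X → X) : Prop :=
  ∀ ε > (0 : ℝ), ∃ δ > (0 : ℝ), ∀ x : ℕ → X,
    (∀ i, dist (f (x i)) (x (i + 1)) < δ) →
    (∃ M, 1 ≤ M ∧ ∀ i, x (i + M) = x i) →
    ∃ y, IsPeriodicPt' f y ∧ ∀ i, dist (f^[i] y) (x i) < ε

/-- Periodic shadowing property for two-sided pseudo-orbits of a homeomorphism. -/
def PeriodicShadowingZ [MetricSpace X] (f : X ≃ₜ X) : Prop :=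
  ∀ ε > (0 : ℝ), ∃ δ > (0 : ℝ), ∀ x : ℤ → X,
    (∀ i, dist (f (x i)) (x (i + 1)) < δ) →
    (∃ M : ℕ, 1 ≤ M ∧ ∀ i, x (i + M) = x i) →
    ∃ y, IsPeriodicPt' f y ∧ ∀ i, dist (zit f i y) (x i) < ε

/-- Strong periodic shadowing: the shadowing point has the same period as the pseudo-orbit. -/
def StrongPeriodicShadowingZ [MetricSpace X] (f : X ≃ₜ X) : Prop :=
  ∀ ε > (0 : ℝ), ∃ δ > (0 : ℝ), ∀ (N : ℕ), 1 ≤ N → ∀ x : ℤ → X,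
    (∀ i, dist (f (x i)) (x (i + 1)) < δ) →
    (∀ i, x (i + N) = x i) →
    ∃ y, f^[N] y = y ∧ ∀ i, dist (zit f i y) (x i) < ε

/-- Topological transitivity of a homeomorphism (some point has dense two-sided orbit). -/
def TransitiveZ [TopologicalSpace X] (f : X ≃ₜ X) : Prop :=
  ∃ x : X, Dense (Set.range fun n : ℤ => zit f n x)

/-- Measure expansiveness of a homeomorphism. -/
def MeasExpansive [MetricSpace X] [MeasurableSpace X] (f : X ≃ₜ X) : Prop :=
  ∃ δ > (0 : ℝ), ∀ μ : Measure X, IsProbabilityMeasure μ →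
    MeasurePreserving f μ μ → (∀ z : X, μ {z} = 0) →
    ∀ x : X, μ (Gamma f δ x) = 0

/-- Strong measure expansiveness of a homeomorphism. -/
def StrongMeasExpansive [MetricSpace X] [MeasurableSpace X] (f : X ≃ₜ X) : Prop :=
  ∃ δ > (0 : ℝ), ∀ μ : Measure X, IsProbabilityMeasure μ →
    MeasurePreserving f μ μ → ∀ x : X, μ (Gamma f δ x) = μ {x}

/-- Strong measure expansiveness with a specified constant. -/
def StrongMeasExpansiveWith [MetricSpace X] [MeasurableSpace X] (f : X ≃ₜ X) (δ : ℝ) : Prop :=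
  ∀ μ : Measure X, IsProbabilityMeasure μ →
    MeasurePreserving f μ μ → ∀ x : X, μ (Gamma f δ x) = μ {x}

/-! Group a fine pseudo-orbit into blocks of length `n ≥ N`: uniform continuity makes consecutive
block starts `δ`-chained under `f^[n]`, so local weak specification traces any finite number of
blocks, and compactness yields one point tracing all of them. Inside a block the pseudo-orbit stays
close to the true orbit of the block start, again by uniform continuity. -/

def IsPseudoOrbit [PseudoMetricSpace X] (f : X → X) (δ : ℝ) (x : ℕ → X) : Prop :=
  ∀ i, dist (f (x i)) (x (i + 1)) < δ

theorem UniformContinuous.exists_pos_forall_dist_iterate_lt [PseudoMetricSpace X] {f : X → X}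
    (hf : UniformContinuous f) (m : ℕ) {η : ℝ} (hη : 0 < η) :
    ∃ δ > 0, ∀ x : ℕ → X, IsPseudoOrbit f δ x →
      ∀ i, ∀ m' ≤ m, dist (f^[m'] (x i)) (x (i + m')) < η := by
  induction m generalizing η with
  | zero => exact ⟨1, one_pos, fun x _ i m' hm' => by simp [Nat.le_zero.1 hm', hη]⟩
  | succ m ih =>
    obtain ⟨ρ, hρ, hfρ⟩ := Metric.uniformContinuous_iff.1 hf (η / 2) (half_pos hη)
    obtain ⟨δ, hδ, hclose⟩ := ih (lt_min hρ hη)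
    refine ⟨min δ (η / 2), lt_min hδ (half_pos hη), fun x hx i m' hm' => ?_⟩
    have hxδ : IsPseudoOrbit f δ x := fun j => (hx j).trans_le (min_le_left _ _)
    obtain hm' | rfl := Nat.le_succ_iff.1 hm'
    · exact (hclose x hxδ i m' hm').trans_le (min_le_right _ _)
    · calc dist (f^[m + 1] (x i)) (x (i + (m + 1)))
          ≤ dist (f (f^[m] (x i))) (f (x (i + m))) + dist (f (x (i + m))) (x (i + m + 1)) := by
            rw [Function.iterate_succ_apply', ← add_assoc]
            exact dist_triangle _ _ _
        _ < η / 2 + η / 2 :=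
            add_lt_add (hfρ ((hclose x hxδ i m le_rfl).trans_le (min_le_left _ _)))
              ((hx _).trans_le (min_le_right _ _))
        _ = η := add_halves η

theorem exists_forall_dist_iterate_le_of_forall_lt [PseudoMetricSpace X] [CompactSpace X]
    {f : X → X} (hf : Continuous f) (w : ℕ → X) {c : ℝ}
    (h : ∀ k, ∃ y, ∀ j < k, dist (f^[j] y) (w j) ≤ c) :
    ∃ z, ∀ j, dist (f^[j] z) (w j) ≤ c := by
  set K : ℕ → Set X := fun k => {y | ∀ j < k, dist (f^[j] y) (w j) ≤ c}
  have hK : ∀ k, IsClosed (K k) := fun k => by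
    simp only [K, Set.ofPred_forall]
    exact isClosed_biInter fun j _ =>
      isClosed_le ((hf.iterate j).dist continuous_const) continuous_const
  obtain ⟨z, hz⟩ := IsCompact.nonempty_iInter_of_sequence_nonempty_isCompact_isClosed K
    (fun k y hy j hj => hy j (Nat.lt_succ_of_lt hj)) h (hK 0).isCompact hK
  exact ⟨z, fun j => Set.mem_iInter.1 hz (j + 1) j j.lt_succ_self⟩

theorem dist_iterate_lt_of_forall_block [PseudoMetricSpace X] {f : X → X} {n k : ℕ}
    (hn : 0 < n) {y : X} {b : ℕ → X} {c : ℝ}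
    (h : ∀ i < k, ∀ j, i * n ≤ j → j < (i + 1) * n → dist (f^[j] y) (f^[j - i * n] (b i)) < c)
    {j : ℕ} (hj : j < k * n) :
    dist (f^[j] y) (f^[j % n] (b (j / n))) < c := by
  rw [Nat.mod_eq_sub_div_mul]
  exact h (j / n) ((Nat.div_lt_iff_lt_mul hn).2 hj) j (Nat.div_mul_le_self j n)
    ((Nat.div_lt_iff_lt_mul hn).1 (Nat.lt_succ_self _))

theorem localWeakSpec_implies_shadowing
    [MetricSpace X] [CompactSpace X] (f : X → X) (hf : Continuous f)
    (hspec : LocalWeakSpec f) : ShadowingN f := by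
  intro ε hε
  obtain ⟨N, δ, hδ, hspec⟩ := hspec (ε / 2) (half_pos hε)
  set n := max N 1
  have hn : 0 < n := lt_max_of_lt_right one_pos
  obtain ⟨δ₁, hδ₁, hclose⟩ := (CompactSpace.uniformContinuous_of_continuous hf)
    |>.exists_pos_forall_dist_iterate_lt n (lt_min hδ (by positivity : 0 < ε / 4))
  refine ⟨δ₁, hδ₁, fun x hx => ?_⟩
  have hblocks : ∀ i, dist (f^[n] (x (i * n))) (x ((i + 1) * n)) < δ := fun i => by
    rw [add_one_mul]
    exact (hclose x hx (i * n) n le_rfl).trans_le (min_le_left _ _)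
  obtain ⟨z, hz⟩ := exists_forall_dist_iterate_le_of_forall_lt hf
    (fun j => f^[j % n] (x (j / n * n))) fun k => by
      obtain ⟨y, hy⟩ := hspec n (le_max_left _ _) k (fun i => x (i * n)) fun i _ => hblocks i
      exact ⟨y, fun j hj => (dist_iterate_lt_of_forall_block hn hy
        (hj.trans_le (Nat.le_mul_of_pos_right k hn))).le⟩
  refine ⟨z, fun j => ?_⟩
  have hinside := hclose x hx (j / n * n) (j % n) (Nat.mod_lt j hn).le
  rw [Nat.div_add_mod'] at hinside
  calc dist (f^[j] z) (x j)
      ≤ dist (f^[j] z) (f^[j % n] (x (j / n * n))) + dist (f^[j % n] (x (j / n * n))) (x j) :=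
        dist_triangle _ _ _
    _ < ε / 2 + ε / 4 := add_lt_add_of_le_of_lt (hz j) (hinside.trans_le (min_le_right _ _))
    _ < ε := by linarith
end

section
/- A continuous map f on a compact metric space has the limit shadowing property if and only if it has the local limit specification property. -/
open MeasureTheory Filter Metric Topology

variable {X : Type*}

/-- Limit shadowing property. -/
def LimitShadowing [MetricSpace X] (f : X → X) : Prop :=
  ∀ x : ℕ → X,
    Tendsto (fun i => dist (f (x i)) (x (i + 1))) atTop (nhds 0) →
    ∃ y, Tendsto (fun i => dist (f^[i] y) (x i)) atTop (nhds 0)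

/-- Local limit specification property. -/
def LocalLimitSpec [MetricSpace X] (f : X → X) : Prop :=
  ∃ N : ℕ, ∀ n, N ≤ n → ∀ x : ℕ → X,
    Tendsto (fun i => dist (f^[n] (x i)) (x (i + 1))) atTop (nhds 0) →
    ∃ y, ∀ ε > (0 : ℝ), ∃ M : ℕ, ∀ i, M ≤ i → ∀ j ≤ n,
      dist (f^[j + i * n] y) (f^[j] (x i)) < ε

/-! Filling in the orbit segment `x i, f (x i), …, f^[n-1] (x i)` between consecutive terms turns
a limit pseudo-orbit of `f^[n]` into one of `f` whose only jumps sit at multiples of `n`, so limit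
shadowing gives the local limit specification with `N = 1`. Conversely, the subsequence
`x (i * n)` of a limit pseudo-orbit of `f` is a limit pseudo-orbit of `f^[n]`, and on the compact
space the finitely many iterates `f^[j]`, `j ≤ n`, are uniformly continuous, so tracing the
subsequence block by block traces the whole sequence. -/

theorem forall_exists_forall_le_lt_iff_tendsto {u : ℕ → ℕ → ℝ} (hu : ∀ j i, 0 ≤ u j i) (n : ℕ) :
    (∀ ε > (0 : ℝ), ∃ M : ℕ, ∀ i, M ≤ i → ∀ j ≤ n, u j i < ε) ↔
      ∀ j ≤ n, Tendsto (u j) atTop (𝓝 0) := by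
  have hev : ∀ ε, (∃ M : ℕ, ∀ i, M ≤ i → ∀ j ≤ n, u j i < ε) ↔
      ∀ j ≤ n, ∀ᶠ i in atTop, u j i < ε := fun ε => by
    simpa only [← eventually_atTop, Finset.mem_Iic] using
      eventually_all_finset (l := atTop) (Finset.Iic n) (p := fun j i => u j i < ε)
  simp only [hev, Metric.tendsto_nhds, Real.dist_0_eq_abs, abs_of_nonneg (hu _ _)]
  exact ⟨fun h j hj ε hε => h ε hε j hj, fun h ε hε j hj => h j hj ε hε⟩

theorem tendsto_of_tendsto_comp_add_mul {β : Type*} {u : ℕ → β} {l : Filter β} {n : ℕ}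
    (hn : 0 < n) (h : ∀ j < n, Tendsto (fun i => u (j + i * n)) atTop l) :
    Tendsto u atTop l := by
  intro s hs
  obtain ⟨M, hM⟩ := eventually_atTop.1 <|
    (eventually_all_finset (Finset.range n)).2 fun j hj => h j (Finset.mem_range.1 hj) hs
  refine mem_atTop_sets.2 ⟨M * n, fun k hk => ?_⟩
  simpa only [Set.mem_preimage, Nat.mod_add_div'] using
    hM (k / n) ((Nat.le_div_iff_mul_le hn).2 hk) (k % n) (Finset.mem_range.2 (Nat.mod_lt k hn))

theorem UniformContinuous.tendsto_dist_comp {β ι : Type*} [PseudoMetricSpace X]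
    [PseudoMetricSpace β] {f : X → β} (hf : UniformContinuous f) {l : Filter ι} {a b : ι → X}
    (h : Tendsto (fun k => dist (a k) (b k)) l (𝓝 0)) :
    Tendsto (fun k => dist (f (a k)) (f (b k))) l (𝓝 0) :=
  tendsto_uniformity_iff_dist_tendsto_zero.1 <|
    Tendsto.comp hf (tendsto_uniformity_iff_dist_tendsto_zero (f := fun k => (a k, b k)) |>.2 h)

def concatOrbitSegments (f : X → X) (n : ℕ) (x : ℕ → X) (k : ℕ) : X :=
  f^[k % n] (x (k / n))

theorem concatOrbitSegments_add_mul {f : X → X} {n j : ℕ} (hj : j < n) (x : ℕ → X) (i : ℕ) :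
    concatOrbitSegments f n x (j + i * n) = f^[j] (x i) := by
  have hn : 0 < n := j.zero_le.trans_lt hj
  simp only [concatOrbitSegments, Nat.add_mul_mod_self_right, Nat.mod_eq_of_lt hj,
    Nat.add_mul_div_right _ _ hn, Nat.div_eq_of_lt hj, zero_add]

theorem concatOrbitSegments_mul {f : X → X} {n : ℕ} (hn : 0 < n) (x : ℕ → X) (i : ℕ) :
    concatOrbitSegments f n x (i * n) = x i := by
  simpa using concatOrbitSegments_add_mul (f := f) hn x i

section PseudoOrbit

variable [PseudoMetricSpace X] {f : X → X}

theorem tendsto_dist_iterate_apply_shift (hf : UniformContinuous f) {x : ℕ → X}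
    (hx : Tendsto (fun i => dist (f (x i)) (x (i + 1))) atTop (𝓝 0)) (m : ℕ) :
    Tendsto (fun k => dist (f^[m] (x k)) (x (k + m))) atTop (𝓝 0) := by
  induction m with
  | zero => simp
  | succ m ih =>
    have hstep := (hf.tendsto_dist_comp ih).add (hx.comp (tendsto_add_atTop_nat m))
    rw [add_zero] at hstep
    refine squeeze_zero (fun _ => dist_nonneg) (fun k => ?_) hstep
    rw [Function.iterate_succ_apply', ← add_assoc]
    exact dist_triangle _ (f (x (k + m))) _

theorem dist_concatOrbitSegments_le {n : ℕ} (hn : 0 < n) (x : ℕ → X) (k : ℕ) :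
    dist (f (concatOrbitSegments f n x k)) (concatOrbitSegments f n x (k + 1)) ≤
      dist (f^[n] (x (k / n))) (x (k / n + 1)) := by
  obtain ⟨j, i, hj, rfl⟩ : ∃ j i, j < n ∧ k = j + i * n :=
    ⟨k % n, k / n, Nat.mod_lt k hn, (Nat.mod_add_div' k n).symm⟩
  rw [Nat.add_mul_div_right _ _ hn, Nat.div_eq_of_lt hj, zero_add,
    concatOrbitSegments_add_mul hj, ← Function.iterate_succ_apply' f]
  rcases Nat.lt_or_eq_of_le hj with hinside | hlast
  · rw [add_right_comm, concatOrbitSegments_add_mul hinside, dist_self]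
    exact dist_nonneg
  · have hnext : j + i * n + 1 = 0 + (i + 1) * n := by rw [← hlast, Nat.succ_eq_add_one]; ring
    rw [hnext, concatOrbitSegments_add_mul hn, Function.iterate_zero_apply, hlast]

theorem tendsto_dist_concatOrbitSegments {n : ℕ} (hn : 0 < n) {x : ℕ → X}
    (hx : Tendsto (fun i => dist (f^[n] (x i)) (x (i + 1))) atTop (𝓝 0)) :
    Tendsto (fun k => dist (f (concatOrbitSegments f n x k)) (concatOrbitSegments f n x (k + 1)))
      atTop (𝓝 0) :=
  squeeze_zero (fun _ => dist_nonneg) (dist_concatOrbitSegments_le hn x)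
    (hx.comp (Nat.tendsto_div_const_atTop hn.ne'))

end PseudoOrbit

theorem limitShadowing_iff_localLimitSpec
    [MetricSpace X] [CompactSpace X] (f : X → X) (hf : Continuous f) :
    LimitShadowing f ↔ LocalLimitSpec f := by
  have huc : UniformContinuous f := CompactSpace.uniformContinuous_of_continuous hf
  constructor
  · intro hshadow
    refine ⟨1, fun n hn x hx => ?_⟩
    obtain ⟨y, hy⟩ := hshadow _ (tendsto_dist_concatOrbitSegments hn hx)
    refine ⟨y, (forall_exists_forall_le_lt_iff_tendsto (fun _ _ => dist_nonneg) n).2 fun j _ => ?_⟩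
    have hblock := (huc.iterate f j).tendsto_dist_comp (hy.comp (tendsto_id.atTop_mul_const' hn))
    simpa only [Function.comp_apply, id, concatOrbitSegments_mul hn, ← Function.iterate_add_apply]
      using hblock
  · rintro ⟨N, hspec⟩ x hx
    have hn : 0 < N + 1 := N.succ_pos
    have hmul : Tendsto (fun i => i * (N + 1)) atTop atTop := tendsto_id.atTop_mul_const' hn
    obtain ⟨y, hy⟩ := hspec (N + 1) N.le_succ (fun i => x (i * (N + 1))) <| by
      simpa only [Function.comp_def, add_mul, one_mul] using
        (tendsto_dist_iterate_apply_shift huc hx (N + 1)).comp hmul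
    have htrace := (forall_exists_forall_le_lt_iff_tendsto (fun _ _ => dist_nonneg) _).1 hy
    refine ⟨y, tendsto_of_tendsto_comp_add_mul hn fun j hj => ?_⟩
    have hsum := (htrace j hj.le).add ((tendsto_dist_iterate_apply_shift huc hx j).comp hmul)
    rw [add_zero] at hsum
    refine squeeze_zero (fun _ => dist_nonneg) (fun i => ?_) hsum
    rw [Function.comp_apply, add_comm (i * (N + 1)) j]
    exact dist_triangle _ _ _
end

section
/- If a continuous map f on a compact metric space has the local specification property, then f has the periodic shadowing property. -/
open MeasureTheory Filter Metric Topology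

variable {X : Type*}

/-! Split a periodic pseudo-orbit of period `k` into `k` blocks of a fixed length `n ≥ N`.
If the pseudo-orbit is fine enough, each block stays close to the true orbit segment of its
first point (uniform continuity), and the block starts form a closed `δ`-chain for `f^[n]`.
Local specification traces this chain by a point of period `k * n`, and since the pseudo-orbit
also has period `k * n`, closeness on one period gives closeness everywhere. -/

open Function

theorem UniformContinuous.exists_dist_iterate_lt_of_pseudoOrbit {α : Type*} [PseudoMetricSpace α]
    {f : α → α} (hf : UniformContinuous f) (n : ℕ) {η : ℝ} (hη : 0 < η) :
    ∃ δ > 0, ∀ x : ℕ → α, (∀ i, dist (f (x i)) (x (i + 1)) < δ) →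
      ∀ i, ∀ m ≤ n, dist (f^[m] (x i)) (x (i + m)) < η := by
  induction n generalizing η with
  | zero =>
    refine ⟨1, one_pos, fun x _ i m hm => ?_⟩
    obtain rfl := Nat.le_zero.mp hm
    simpa using hη
  | succ n ih =>
    obtain ⟨α, hα, hfα⟩ := Metric.uniformContinuous_iff.mp hf (η / 2) (half_pos hη)
    obtain ⟨δ, hδ, htrace⟩ := ih (lt_min hα (half_pos hη))
    refine ⟨min δ (η / 2), lt_min hδ (half_pos hη), fun x hx i m hm => ?_⟩
    have hprev : ∀ m ≤ n, dist (f^[m] (x i)) (x (i + m)) < min α (η / 2) :=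
      htrace x (fun j => (hx j).trans_le (min_le_left _ _)) i
    rcases Nat.lt_or_ge m (n + 1) with hlt | hge
    · exact (hprev m (Nat.lt_succ_iff.mp hlt)).trans_le
        ((min_le_right _ _).trans (half_le_self hη.le))
    obtain rfl : m = n + 1 := le_antisymm hm hge
    calc dist (f^[n + 1] (x i)) (x (i + (n + 1)))
        ≤ dist (f (f^[n] (x i))) (f (x (i + n))) + dist (f (x (i + n))) (x (i + n + 1)) := by
          rw [iterate_succ_apply']; exact dist_triangle _ _ _
      _ < η / 2 + η / 2 :=
          add_lt_add (hfα ((hprev n le_rfl).trans_le (min_le_left _ _)))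
            ((hx _).trans_le (min_le_right _ _))
      _ = η := add_halves η

theorem dist_iterate_lt_of_periodic {α : Type*} [PseudoMetricSpace α] {f : α → α} {y : α}
    {x : ℕ → α} {p : ℕ} {ε : ℝ} (hp : 0 < p) (hy : IsPeriodicPt f p y) (hx : Periodic x p)
    (h : ∀ j < p, dist (f^[j] y) (x j) < ε) (j : ℕ) : dist (f^[j] y) (x j) < ε := by
  rw [← hy.iterate_mod_apply, ← hx.map_mod_nat]
  exact h _ (Nat.mod_lt _ hp)

theorem localSpec_implies_periodicShadowing
    [MetricSpace X] [CompactSpace X] (f : X → X) (hf : Continuous f)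
    (hspec : LocalSpec f) : PeriodicShadowingN f := by
  intro ε hε
  obtain ⟨N, δs, hδs, hspec⟩ := hspec (ε / 2) (half_pos hε)
  set n := max N 1
  have hn : 0 < n := le_max_right N 1
  obtain ⟨δ, hδ, htrace⟩ := (CompactSpace.uniformContinuous_of_continuous hf)
    |>.exists_dist_iterate_lt_of_pseudoOrbit n (lt_min hδs (half_pos hε))
  refine ⟨δ, hδ, fun x hx ⟨k, hk, hxk⟩ => ?_⟩
  have hxkn : Periodic x (k * n) := mul_comm n k ▸ Periodic.nat_mul hxk n
  have hchain : ∀ i < k, dist (f^[n] (x (i * n))) (x ((i + 1) % k * n)) < δs := fun i _ => by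
    rw [← Nat.mul_mod_mul_right, hxkn.map_mod_nat, add_one_mul]
    exact (htrace x hx (i * n) n le_rfl).trans_le (min_le_left _ _)
  obtain ⟨y, hy, hclose⟩ := hspec n (le_max_left N 1) k hk (fun i => x (i * n)) hchain
  have hkn : 0 < k * n := Nat.mul_pos hk hn
  refine ⟨y, ⟨k * n, hkn, hy⟩, dist_iterate_lt_of_periodic hkn hy hxkn fun j hj => ?_⟩
  have hij : j / n * n ≤ j ∧ j < j / n * n + n := by
    have := Nat.div_add_mod' j n; have := Nat.mod_lt j hn; omega
  set i := j / n
  have hik : i < k := (Nat.div_lt_iff_lt_mul hn).mpr hj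
  have hsegment := htrace x hx (i * n) (j - i * n) (by omega)
  rw [Nat.add_sub_cancel' hij.1] at hsegment
  calc dist (f^[j] y) (x j)
      ≤ dist (f^[j] y) (f^[j - i * n] (x (i * n))) + dist (f^[j - i * n] (x (i * n))) (x j) :=
        dist_triangle _ _ _
    _ < ε / 2 + ε / 2 :=
        add_lt_add (hclose i hik j hij.1 (add_one_mul i n ▸ hij.2))
          (hsegment.trans_le (min_le_right _ _))
    _ = ε := add_halves ε
end

section
/- A homeomorphism without periodic points of a compact metric space is measure expansive if and only if it is strongly measure expansive. -/
open MeasureTheory Filter Metric Topology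

variable {X : Type*}

/-- Poincaré recurrence applied to the atom `{z}`: some iterate of `z` returns to `z`. -/
theorem MeasureTheory.MeasurePreserving.measure_singleton_eq_zero_of_not_isPeriodicPt'
    {α : Type*} [MeasurableSpace α] [MeasurableSingletonClass α] {μ : Measure α}
    [IsFiniteMeasure μ] {f : α → α} (hf : MeasurePreserving f μ μ) {z : α}
    (hz : ¬ IsPeriodicPt' f z) : μ {z} = 0 := by
  by_contra hz₀
  obtain ⟨_, rfl, m, hm, hmz⟩ :=
    hf.exists_mem_iterate_mem (measurableSet_singleton z).nullMeasurableSet hz₀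
  exact hz ⟨m, Nat.one_le_iff_ne_zero.2 hm, hmz⟩

theorem StrongMeasExpansive.measExpansive [MetricSpace X] [MeasurableSpace X] {f : X ≃ₜ X}
    (hf : StrongMeasExpansive f) : MeasExpansive f := by
  obtain ⟨δ, hδ, hstrong⟩ := hf
  exact ⟨δ, hδ, fun μ hμ hfμ hatomless x ↦ (hstrong μ hμ hfμ x).trans (hatomless x)⟩

theorem measExpansive_iff_strongMeasExpansive_of_no_periodic_points_general
    [MetricSpace X] [MeasurableSpace X] [BorelSpace X]
    (f : X ≃ₜ X) (hnoper : ∀ x : X, ¬ IsPeriodicPt' (⇑f) x) :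
    MeasExpansive f ↔ StrongMeasExpansive f := by
  refine ⟨fun ⟨δ, hδ, hexp⟩ ↦ ⟨δ, hδ, fun μ hμ hfμ x ↦ ?_⟩, StrongMeasExpansive.measExpansive⟩
  have hatomless : ∀ z, μ {z} = 0 := fun z ↦
    hfμ.measure_singleton_eq_zero_of_not_isPeriodicPt' (hnoper z)
  rw [hatomless x, hexp μ hμ hfμ hatomless x]

theorem measExpansive_iff_strongMeasExpansive_of_no_periodic_points
    [MetricSpace X] [CompactSpace X] [MeasurableSpace X] [BorelSpace X]
    (f : X ≃ₜ X) (hnoper : ∀ x : X, ¬ IsPeriodicPt' (⇑f) x) :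
    MeasExpansive f ↔ StrongMeasExpansive f :=
  measExpansive_iff_strongMeasExpansive_of_no_periodic_points_general f hnoper
end

section
/- If f is a strongly measure expansive homeomorphism of a compact metric space with strong measure expansivity constant δ, then the restriction of f to its set of periodic points is expansive with expansive constant δ: if p, q are periodic points with q ∈ Γ_δ(p), then q = p. -/
open MeasureTheory Filter Metric Topology

variable {X : Type*}

/-! The equidistributed measure on the orbit of a periodic point `q` is `f`-invariant and gives
`q` positive mass. If `q ≠ p` lies in `Γ_δ(p)`, which then also contains `p`, this measure gives
`Γ_δ(p)` mass at least `μ {p} + μ {q} > μ {p}`, contradicting strong measure expansivity. -/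

open scoped ENNReal

namespace MeasureTheory.Measure

variable {α : Type*} [MeasurableSpace α]

noncomputable def periodicOrbitMeasure (f : α → α) (n : ℕ) (x : α) : Measure α :=
  (n : ℝ≥0∞)⁻¹ • ∑ i ∈ Finset.range n, dirac (f^[i] x)

variable {f : α → α} {n : ℕ} {x : α}

theorem map_periodicOrbitMeasure (hf : Measurable f) (hx : Function.IsPeriodicPt f n x) :
    (periodicOrbitMeasure f n x).map f = periodicOrbitMeasure f n x := by
  have hshift :
      ∑ i ∈ Finset.range n, dirac (f^[i + 1] x) = ∑ i ∈ Finset.range n, dirac (f^[i] x) := by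
    cases n with
    | zero => simp
    | succ m =>
      rw [Finset.sum_range_succ, hx.eq, Finset.sum_range_succ' (fun i => dirac (f^[i] x)),
        Function.iterate_zero_apply]
  rw [periodicOrbitMeasure, Measure.map_smul, ← mapₗ_apply_of_measurable hf, _root_.map_sum]
  simp only [mapₗ_apply_of_measurable hf, map_dirac' hf, ← Function.iterate_succ_apply' f, hshift]

theorem isProbabilityMeasure_periodicOrbitMeasure (hn : n ≠ 0) :
    IsProbabilityMeasure (periodicOrbitMeasure f n x) := by
  constructor
  simp [periodicOrbitMeasure,
    ENNReal.inv_mul_cancel (Nat.cast_ne_zero.mpr hn) (ENNReal.natCast_ne_top n)]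

theorem periodicOrbitMeasure_singleton_ne_zero (hn : n ≠ 0) :
    periodicOrbitMeasure f n x {x} ≠ 0 := by
  simp only [periodicOrbitMeasure, smul_apply, finsetSum_apply, smul_eq_mul, ne_eq, mul_eq_zero,
    ENNReal.inv_eq_zero, ENNReal.natCast_ne_top, Finset.sum_eq_zero_iff, false_or, not_forall]
  exact ⟨0, Finset.mem_range.mpr (Nat.pos_of_ne_zero hn), by simp⟩

end MeasureTheory.Measure

theorem mem_Gamma_self_of_mem [MetricSpace X] {f : X ≃ₜ X} {δ : ℝ} {x y : X}
    (hy : y ∈ Gamma f δ x) : x ∈ Gamma f δ x := fun i => by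
  simpa using dist_nonneg.trans (hy 0)

theorem StrongMeasExpansiveWith.measure_singleton_eq_zero_of_mem_Gamma [MetricSpace X]
    [MeasurableSpace X] [MeasurableSingletonClass X] {f : X ≃ₜ X} {δ : ℝ}
    (hf : StrongMeasExpansiveWith f δ) {μ : Measure X} [IsProbabilityMeasure μ]
    (hμ : MeasurePreserving f μ μ) {p q : X} (hq : q ∈ Gamma f δ p) (hqp : q ≠ p) :
    μ {q} = 0 := by
  have hpq : μ {p} + μ {q} ≤ μ {p} := calc
    μ {p} + μ {q} = μ ({p} ∪ {q}) :=
      (measure_union (Set.disjoint_singleton.mpr hqp.symm) (measurableSet_singleton q)).symm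
    _ ≤ μ (Gamma f δ p) :=
      measure_mono (Set.union_subset (Set.singleton_subset_iff.mpr (mem_Gamma_self_of_mem hq))
        (Set.singleton_subset_iff.mpr hq))
    _ = μ {p} := hf μ inferInstance hμ p
  rwa [(ENNReal.cancel_of_ne (measure_ne_top μ {p})).add_le_iff_nonpos_right,
    nonpos_iff_eq_zero] at hpq

theorem strongMeasExpansive_expansive_on_periodic_points_general
    [MetricSpace X] [MeasurableSpace X] [BorelSpace X]
    (f : X ≃ₜ X) (δ : ℝ) (hsme : StrongMeasExpansiveWith f δ)
    (p q : X) (hq : IsPeriodicPt' (⇑f) q)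
    (hq' : q ∈ Gamma f δ p) : q = p := by
  by_contra hqp
  obtain ⟨n, hn, hqn⟩ := hq
  have hn : n ≠ 0 := Nat.one_le_iff_ne_zero.mp hn
  have hf : Measurable f := f.continuous.measurable
  have := Measure.isProbabilityMeasure_periodicOrbitMeasure (f := f) (x := q) hn
  have hμ : MeasurePreserving f (Measure.periodicOrbitMeasure f n q) _ :=
    ⟨hf, Measure.map_periodicOrbitMeasure hf hqn⟩
  exact Measure.periodicOrbitMeasure_singleton_ne_zero hn
    (hsme.measure_singleton_eq_zero_of_mem_Gamma hμ hq' hqp)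

theorem strongMeasExpansive_expansive_on_periodic_points
    [MetricSpace X] [CompactSpace X] [MeasurableSpace X] [BorelSpace X]
    (f : X ≃ₜ X) (δ : ℝ) (hδ : 0 < δ) (hsme : StrongMeasExpansiveWith f δ)
    (p q : X) (hp : IsPeriodicPt' (⇑f) p) (hq : IsPeriodicPt' (⇑f) q)
    (hq' : q ∈ Gamma f δ p) : q = p :=
  strongMeasExpansive_expansive_on_periodic_points_general f δ hsme p q hq hq'
end

section
/- If f is a strongly measure expansive homeomorphism of a compact metric space with the shadowing property, then f has the strong periodic shadowing property: every periodic δ-pseudo orbit of period N is ε-shadowed by a periodic point of period N (not merely some period). -/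
open MeasureTheory Filter Metric Topology

variable {X : Type*}

/-!
Shadow a periodic `δ`-pseudo orbit of period `N` by a point `y` so closely that every
`f^[N k] y` lies in the dynamical ball `Γ_e(y)`, where `e` is the strong measure expansivity
constant. Averaging Dirac masses along the orbit of `y` and passing to a weak limit
(Krylov–Bogolyubov) gives an invariant probability measure `μ` with `μ Γ_e(y) ≥ 1/N`.
Strong measure expansivity then makes `y` an atom carrying all the mass of `Γ_e(y)`; since
`f^[N] y ∈ Γ_e(y)` is an atom of at least the same mass, it must be `y` itself.
-/

open scoped ENNReal BoundedContinuousFunction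

lemma zit_eq_coe_zpow [TopologicalSpace X] (f : X ≃ₜ X) (i : ℤ) : zit f i = ⇑(f ^ i) := by
  funext x
  exact congrArg (· x) (map_zpow
    (⟨⟨Homeomorph.toEquiv, rfl⟩, fun _ _ => rfl⟩ : (X ≃ₜ X) →* Equiv.Perm X) f i).symm

lemma zit_iterate [TopologicalSpace X] (f : X ≃ₜ X) (i : ℤ) (n : ℕ) (x : X) :
    zit f i (f^[n] x) = zit f (i + n) x := by
  rw [zit, zit, zpow_add, Equiv.Perm.mul_apply, zpow_natCast, Equiv.Perm.coe_pow]
  rfl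

lemma isClosed_Gamma [MetricSpace X] (f : X ≃ₜ X) (δ : ℝ) (x : X) :
    IsClosed (Gamma f δ x) := by
  simp only [Gamma, Set.ofPred_forall, zit_eq_coe_zpow]
  exact isClosed_iInter fun i => isClosed_le (by fun_prop) continuous_const

lemma Gamma_mono [MetricSpace X] (f : X ≃ₜ X) {δ δ' : ℝ} (h : δ ≤ δ') (x : X) :
    Gamma f δ x ⊆ Gamma f δ' x :=
  fun _ hy i => (hy i).trans h

lemma iterate_mul_mem_Gamma_of_shadows [MetricSpace X] {f : X ≃ₜ X} {x : ℤ → X} {N : ℕ}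
    (hper : ∀ i, x (i + N) = x i) {y : X} {η : ℝ} (hy : ∀ i, dist (zit f i y) (x i) < η)
    (k : ℕ) : f^[N * k] y ∈ Gamma f (2 * η) y := by
  intro i
  have hperk : x (i + (N * k : ℕ)) = x i := by
    simpa [mul_comm] using (show Function.Periodic x N from hper).nat_mul k i
  rw [zit_iterate]
  calc dist (zit f i y) (zit f (i + (N * k : ℕ)) y)
      ≤ dist (zit f i y) (x i) + dist (zit f (i + (N * k : ℕ)) y) (x i) :=
        dist_triangle_right _ _ _
    _ ≤ 2 * η := by linarith [hy i, hperk ▸ hy (i + (N * k : ℕ))]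

lemma birkhoffAverage_comp_self {R M : Type*} [DivisionSemiring R] [AddCommMonoid M] [Module R M]
    (g : X → X) (φ : X → M) (n : ℕ) (x : X) :
    birkhoffAverage R g (φ ∘ g) n x = birkhoffAverage R g φ n (g x) := by
  simp only [birkhoffAverage, birkhoffSum, Function.comp_apply, ← Function.iterate_succ_apply',
    Function.iterate_succ_apply]

lemma natCast_le_birkhoffSum_indicator {g : X → X} {y : X} {s : Set X} {N : ℕ} (hN : N ≠ 0)
    (hmem : ∀ k, g^[N * k] y ∈ s) (k : ℕ) :
    (k : ℝ≥0∞) ≤ birkhoffSum g (s.indicator 1) (N * k) y := by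
  induction k with
  | zero => simp
  | succ k ih =>
    obtain ⟨N, rfl⟩ := Nat.exists_eq_succ_of_ne_zero hN
    rw [Nat.mul_succ, birkhoffSum_add, Nat.cast_succ, birkhoffSum_succ',
      Set.indicator_of_mem (hmem k)]
    exact add_le_add ih le_self_add

section OrbitMeasure

variable [MeasurableSpace X] (g : X → X) (y : X)

noncomputable def orbitMeasure (n : ℕ) : Measure X :=
  (n : ℝ≥0∞)⁻¹ • ∑ k ∈ Finset.range n, Measure.dirac (g^[k] y)

lemma isProbabilityMeasure_orbitMeasure {n : ℕ} (hn : n ≠ 0) :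
    IsProbabilityMeasure (orbitMeasure g y n) :=
  ⟨by simp [orbitMeasure,
    ENNReal.inv_mul_cancel (Nat.cast_ne_zero.2 hn) (ENNReal.natCast_ne_top n)]⟩

lemma orbitMeasure_apply {s : Set X} (hs : MeasurableSet s) (n : ℕ) :
    orbitMeasure g y n s = (n : ℝ≥0∞)⁻¹ * birkhoffSum g (s.indicator 1) n y := by
  simp [orbitMeasure, birkhoffSum, Measure.dirac_apply' _ hs]

lemma integral_orbitMeasure [MeasurableSingletonClass X] (φ : X → ℝ) (n : ℕ) :
    ∫ x, φ x ∂orbitMeasure g y n = birkhoffAverage ℝ g φ n y := by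
  rw [orbitMeasure, integral_smul_measure, integral_finsetSum_measure
    fun k _ => integrable_dirac enorm_lt_top]
  simp [birkhoffAverage, birkhoffSum]

lemma inv_le_orbitMeasure {s : Set X} (hs : MeasurableSet s) {N : ℕ} (hN : N ≠ 0)
    (hmem : ∀ k, g^[N * k] y ∈ s) {k : ℕ} (hk : k ≠ 0) :
    (N : ℝ≥0∞)⁻¹ ≤ orbitMeasure g y (N * k) s := by
  rw [orbitMeasure_apply g y hs, Nat.cast_mul, ENNReal.mul_inv (by simp) (by simp), mul_assoc]
  calc (N : ℝ≥0∞)⁻¹ = (N : ℝ≥0∞)⁻¹ * ((k : ℝ≥0∞)⁻¹ * k) := by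
        rw [ENNReal.inv_mul_cancel (by simpa) (by simp), mul_one]
    _ ≤ _ := by gcongr; exact natCast_le_birkhoffSum_indicator hN hmem k

lemma tendsto_integral_comp_orbitMeasure_sub [MeasurableSingletonClass X] [TopologicalSpace X]
    (φ : X →ᵇ ℝ) :
    Tendsto (fun n => ∫ x, φ (g x) ∂orbitMeasure g y n - ∫ x, φ x ∂orbitMeasure g y n)
      atTop (𝓝 0) := by
  simp only [integral_orbitMeasure]
  refine (tendsto_birkhoffAverage_apply_sub_birkhoffAverage' ℝ φ.isBounded_range g y).congr
    fun n => ?_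
  rw [← birkhoffAverage_comp_self]
  rfl

end OrbitMeasure

theorem exists_measurePreserving_inv_le_measure [MetricSpace X] [CompactSpace X]
    [MeasurableSpace X] [BorelSpace X] {g : X → X} (hg : Continuous g) (y : X) {N : ℕ}
    (hN : N ≠ 0) {s : Set X} (hs : IsClosed s) (hmem : ∀ k, g^[N * k] y ∈ s) :
    ∃ μ : Measure X, IsProbabilityMeasure μ ∧ MeasurePreserving g μ μ ∧
      (N : ℝ≥0∞)⁻¹ ≤ μ s := by
  let μs : ℕ → ProbabilityMeasure X := fun k =>
    ⟨orbitMeasure g y (N * (k + 1)), isProbabilityMeasure_orbitMeasure g y (by positivity)⟩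
  let U := Ultrafilter.of (atTop : Filter ℕ)
  obtain ⟨μ, -, hlim⟩ := isCompact_univ.ultrafilter_le_nhds (U.map μs) (by simp)
  replace hlim : Tendsto μs U (𝓝 μ) := hlim
  have htimes : Tendsto (fun k => N * (k + 1)) U atTop :=
    (tendsto_id.const_mul_atTop' (Nat.pos_of_ne_zero hN)).comp (tendsto_add_atTop_nat 1)
      |>.mono_left (Ultrafilter.of_le _)
  have hmap : Tendsto (fun k => (μs k).map hg.measurable.aemeasurable) U (𝓝 μ) := by
    rw [ProbabilityMeasure.tendsto_iff_forall_integral_tendsto] at hlim ⊢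
    intro φ
    have := ((tendsto_integral_comp_orbitMeasure_sub g y φ).comp htimes).add (hlim φ)
    rw [zero_add] at this
    refine this.congr fun k => ?_
    rw [ProbabilityMeasure.toMeasure_map,
      integral_map hg.aemeasurable φ.continuous.aestronglyMeasurable]
    exact sub_add_cancel _ _
  have hinv : μ.map hg.measurable.aemeasurable = μ := tendsto_nhds_unique
    (ProbabilityMeasure.tendsto_map_of_tendsto_of_continuous _ _ hlim hg) hmap
  refine ⟨μ, inferInstance,
    ⟨hg.measurable, by simpa using congrArg ProbabilityMeasure.toMeasure hinv⟩, ?_⟩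
  calc (N : ℝ≥0∞)⁻¹ ≤ U.limsup fun k => (μs k : Measure X) s :=
        le_limsup_of_frequently_le (Frequently.of_forall fun k =>
          inv_le_orbitMeasure g y hs.measurableSet hN hmem k.succ_ne_zero)
    _ ≤ (μ : Measure X) s := ProbabilityMeasure.limsup_measure_closed_le_of_tendsto hlim hs

lemma MeasureTheory.MeasurePreserving.apply_eq_self_of_measure_le_singleton [MeasurableSpace X]
    [MeasurableSingletonClass X] {μ : Measure X} [IsFiniteMeasure μ] {g : X → X}
    (hg : MeasurePreserving g μ μ) {s : Set X} {y : X} (hy : μ {y} ≠ 0) (hs : μ s ≤ μ {y})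
    (hys : y ∈ s) (hgys : g y ∈ s) : g y = y := by
  by_contra hne
  have hgy : μ {y} ≤ μ {g y} := calc
    μ {y} ≤ μ (g ⁻¹' {g y}) := measure_mono (by simp)
    _ = μ {g y} := hg.measure_preimage (measurableSet_singleton _).nullMeasurableSet
  have hpair : μ {y} + μ {g y} ≤ μ {y} := calc
    μ {y} + μ {g y} = μ {y, g y} := by
      rw [Set.insert_eq, measure_union (by simpa [eq_comm] using hne) (measurableSet_singleton _)]
    _ ≤ μ s := measure_mono (Set.insert_subset hys (Set.singleton_subset_iff.2 hgys))
    _ ≤ μ {y} := hs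
  exact (ENNReal.lt_add_right (measure_ne_top μ _) (hy.bot_lt.trans_le hgy).ne').not_ge hpair

theorem strongMeasExpansive_shadowing_implies_strongPeriodicShadowing
    [MetricSpace X] [CompactSpace X] [MeasurableSpace X] [BorelSpace X]
    (f : X ≃ₜ X) (hsme : StrongMeasExpansive f) (hsh : ShadowingZ f) :
    StrongPeriodicShadowingZ f := by
  obtain ⟨e, he, hexp⟩ := hsme
  intro ε hε
  obtain ⟨δ, hδ, hshδ⟩ := hsh (min ε (e / 2)) (by positivity)
  refine ⟨δ, hδ, fun N hN x hx hper => ?_⟩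
  obtain ⟨y, hy⟩ := hshδ x hx
  have hmem : ∀ k, f^[N * k] y ∈ Gamma f e y := fun k =>
    Gamma_mono f (by linarith [min_le_right ε (e / 2)]) y
      (iterate_mul_mem_Gamma_of_shadows hper hy k)
  obtain ⟨μ, hμ, hf, hμΓ⟩ :=
    exists_measurePreserving_inv_le_measure f.continuous y (by omega) (isClosed_Gamma f e y) hmem
  have hatom : μ (Gamma f e y) = μ {y} := hexp μ hμ hf y
  have hy0 : μ {y} ≠ 0 :=
    hatom ▸ ((ENNReal.inv_pos.2 (ENNReal.natCast_ne_top N)).trans_le hμΓ).ne'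
  exact ⟨y, (hf.iterate N).apply_eq_self_of_measure_le_singleton hy0 hatom.le
    (by simpa using hmem 0) (by simpa using hmem 1), fun i => (hy i).trans_le (min_le_left _ _)⟩
end

section
/- Let f be an expansive homeomorphism of a compact metric space. If f has the local weak specification property, then f has the local specification property (i.e., the tracing points can be chosen periodic). -/
open MeasureTheory Filter Metric Topology

variable {X : Type*}

/-!
Repeating a closed `δ`-chain `x₀ → x₁ → ⋯ → x_{k-1} → x₀` of `n`-step transitions gives a
`kn`-periodic pattern. Local weak specification traces arbitrarily long finite pieces of it;
recentring these tracing orbits and passing to a limit point by compactness yields a point whose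
whole two-sided orbit stays `ε'`-close to the pattern. The orbits of this point and of its image
under `f^{kn}` then stay `2ε'`-close to each other, so expansiveness forces `f^{kn}` to fix it.
-/

def Homeomorph.toPermHom [TopologicalSpace X] : (X ≃ₜ X) →* Equiv.Perm X where
  toFun := Homeomorph.toEquiv
  map_one' := rfl
  map_mul' _ _ := rfl

section Zit

variable [TopologicalSpace X] (f : X ≃ₜ X)

lemma zit_add (i j : ℤ) (x : X) : zit f (i + j) x = zit f i (zit f j x) := by
  simp [zit, zpow_add, Equiv.Perm.mul_apply]

lemma zit_natCast (m : ℕ) (x : X) : zit f m x = f^[m] x := by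
  simp [zit, Equiv.Perm.coe_pow]

lemma continuous_zit (i : ℤ) : Continuous (zit f i) := by
  have h : zit f i = ⇑(f ^ i) := funext fun x => by
    show (Homeomorph.toPermHom f ^ i) x = _
    rw [← map_zpow]; rfl
  exact h ▸ (f ^ i).continuous

end Zit

section Tracing

variable [MetricSpace X] (f : X ≃ₜ X)

theorem exists_forall_dist_zit_le_of_forall_natAbs_le [CompactSpace X] {p : ℤ → X} {ε : ℝ}
    (h : ∀ s : ℕ, ∃ z, ∀ i : ℤ, i.natAbs ≤ s → dist (zit f i z) (p i) ≤ ε) :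
    ∃ z, ∀ i, dist (zit f i z) (p i) ≤ ε := by
  set K : ℕ → Set X := fun s => {z | ∀ i : ℤ, i.natAbs ≤ s → dist (zit f i z) (p i) ≤ ε}
  have hK_closed (s : ℕ) : IsClosed (K s) := by
    simp only [K, Set.ofPred_forall]
    exact isClosed_iInter fun i => isClosed_iInter fun _ =>
      isClosed_le ((continuous_zit f i).dist continuous_const) continuous_const
  obtain ⟨z, hz⟩ := IsCompact.nonempty_iInter_of_sequence_nonempty_isCompact_isClosed K
    (fun s _ hz i hi => hz i (hi.trans s.le_succ)) h (hK_closed 0).isCompact hK_closed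
  exact ⟨z, fun i => Set.mem_iInter.mp hz i.natAbs i le_rfl⟩

/-- Start the forward tracing orbit a multiple of the period earlier. -/
theorem exists_forall_natAbs_le_dist_zit_le_of_periodic {T : ℤ → X} {P : ℕ} (hP : 0 < P)
    (hT : Function.Periodic T P) {ε : ℝ}
    (h : ∀ m : ℕ, ∃ y, ∀ j < m, dist (f^[j] y) (T j) ≤ ε) (s : ℕ) :
    ∃ z, ∀ i : ℤ, i.natAbs ≤ s → dist (zit f i z) (T i) ≤ ε := by
  obtain ⟨y, hy⟩ := h (2 * (s * P) + 1)
  refine ⟨f^[s * P] y, fun i hi => ?_⟩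
  have hsP : s ≤ s * P := Nat.le_mul_of_pos_right s hP
  obtain ⟨j, hj⟩ : ∃ j : ℕ, (j : ℤ) = i + (s * P : ℕ) := ⟨(i + (s * P : ℕ)).toNat, by omega⟩
  have hTi : T i = T j := by rw [hj]; push_cast; exact ((hT.nat_mul s) i).symm
  rw [← zit_natCast, ← zit_add, ← hj, zit_natCast, hTi]
  exact hy j (by omega)

theorem iterate_eq_self_of_forall_dist_zit_le {c : ℝ}
    (hexp : ∀ x y : X, (∀ i : ℤ, dist (zit f i x) (zit f i y) ≤ c) → x = y)
    {T : ℤ → X} {P : ℕ} (hT : Function.Periodic T P) {z : X}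
    (hz : ∀ i, dist (zit f i z) (T i) ≤ c / 2) : f^[P] z = z := by
  refine hexp _ _ fun i => ?_
  calc dist (zit f i (f^[P] z)) (zit f i z)
      ≤ dist (zit f (i + P) z) (T (i + P)) + dist (T i) (zit f i z) := by
        rw [zit_add, zit_natCast, hT i]; exact dist_triangle _ _ _
    _ ≤ c / 2 + c / 2 := add_le_add (hz _) (dist_comm (T i) _ ▸ hz i)
    _ = c := add_halves c

end Tracing

section ChainPattern

/-- The orbit segments of length `n` of `x 0, …, x (k - 1)`, concatenated and repeated
periodically in both directions. -/
def chainPattern (g : X → X) (n k : ℕ) (x : ℕ → X) (i : ℤ) : X :=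
  g^[(i % n).toNat] (x (i / n % k).toNat)

variable (g : X → X) (n k : ℕ) (x : ℕ → X)

theorem chainPattern_periodic : Function.Periodic (chainPattern g n k x) (k * n : ℕ) := by
  intro i
  rcases Nat.eq_zero_or_pos n with rfl | hn
  · simp
  have hdiv : (i + (k * n : ℕ)) / n = i / n + k := by
    push_cast; exact Int.add_mul_ediv_right i k (by omega)
  simp only [chainPattern, hdiv, Int.add_emod_right]
  push_cast
  rw [Int.add_mul_emod_self_right]

theorem chainPattern_natCast (j : ℕ) :
    chainPattern g n k x j = g^[j % n] (x (j / n % k)) := by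
  simp only [chainPattern]
  norm_cast

variable {g n k x}

theorem chainPattern_of_mem_block {i j : ℕ} (hi : i < k) (hj₁ : i * n ≤ j)
    (hj₂ : j < (i + 1) * n) : chainPattern g n k x j = g^[j - i * n] (x i) := by
  have hdiv : j / n = i := Nat.div_eq_of_lt_le hj₁ hj₂
  rw [chainPattern_natCast, hdiv, Nat.mod_eq_of_lt hi, Nat.mod_eq_sub_mul_div, hdiv, mul_comm]

variable [MetricSpace X]

/-- Weak specification applied to the closed chain unrolled into `m` links `i ↦ x (i % k)`. -/
theorem exists_forall_dist_iterate_chainPattern_lt {ε δ : ℝ}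
    (hspec : ∀ (k : ℕ) (x : ℕ → X), (∀ i, i + 1 < k → dist (g^[n] (x i)) (x (i + 1)) < δ) →
      ∃ y, ∀ i < k, ∀ j, i * n ≤ j → j < (i + 1) * n →
        dist (g^[j] y) (g^[j - i * n] (x i)) < ε)
    (hn : 0 < n) (hk : 0 < k) (hx : ∀ i < k, dist (g^[n] (x i)) (x ((i + 1) % k)) < δ)
    (m : ℕ) : ∃ y, ∀ j < m, dist (g^[j] y) (chainPattern g n k x j) < ε := by
  obtain ⟨y, hy⟩ := hspec m (fun i => x (i % k)) fun i _ => by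
    simpa only [Nat.mod_add_mod] using hx (i % k) (Nat.mod_lt i hk)
  refine ⟨y, fun j hj => ?_⟩
  have hjm : j / n < m := (Nat.div_le_self j n).trans_lt hj
  have h := hy (j / n) hjm j (Nat.div_mul_le_self j n) (mul_comm n _ ▸ Nat.lt_mul_div_succ j hn)
  rwa [← Nat.mod_eq_sub_div_mul, ← chainPattern_natCast] at h

end ChainPattern

theorem expansive_localWeakSpec_implies_localSpec
    [MetricSpace X] [CompactSpace X] (f : X ≃ₜ X)
    (hexp : ∃ c > (0 : ℝ), ∀ x y : X,
      (∀ i : ℤ, dist (zit f i x) (zit f i y) ≤ c) → x = y)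
    (hspec : LocalWeakSpec (⇑f)) : LocalSpec (⇑f) := by
  obtain ⟨c, hc, hexp⟩ := hexp
  intro ε hε
  set ε' := min (ε / 2) (c / 2)
  obtain ⟨N, δ, hδ, hS⟩ := hspec ε' (by positivity)
  refine ⟨max N 1, δ, hδ, fun n hn k hk x hx => ?_⟩
  obtain ⟨hNn, hn⟩ := max_le_iff.mp hn
  have hT := chainPattern_periodic (⇑f) n k x
  obtain ⟨z, hz⟩ := exists_forall_dist_zit_le_of_forall_natAbs_le f
    (exists_forall_natAbs_le_dist_zit_le_of_periodic f (Nat.mul_pos hk hn) hT fun m =>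
      (exists_forall_dist_iterate_chainPattern_lt (hS n hNn) hn hk hx m).imp
        fun _ hy j hj => (hy j hj).le)
  refine ⟨z, iterate_eq_self_of_forall_dist_zit_le f hexp hT fun i =>
    (hz i).trans (min_le_right _ _), fun i hi j hj₁ hj₂ => ?_⟩
  rw [← chainPattern_of_mem_block hi hj₁ hj₂, ← zit_natCast]
  exact (hz j).trans_lt ((min_le_left _ _).trans_lt (half_lt_self hε))
end
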